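/- arXiv:1605.06361 — 2 statements merged into one kernel-verified Lean document; each statement's English description precedes it below -/
import Mathlib

section
/- Let r ≥ 4, let T_r be a truncated projective plane of uniformity r with sides V_1,…,V_r, let S = {s_1,…,s_r} be an edge of T_r with s_i ∈ V_i, and let F_1,…,F_r be edges of T_r with S ∩ F_i = {s_i} (so that F_1,…,F_r are pairwise distinct). Then any two distinct edges of H(T_r,S,F_1,…,F_r) intersect in exactly 1, 2, r−1, or r vertices, and the only pairs of distinct edges whose intersection has size exactly r−1 are the r pairs {F_i, (F_i \ {s_i}) ∪ {v_i}} for i = 1,…,r. -/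
open Finset

noncomputable section
open scoped Classical

/-- A set of vertices `C` covers the hypergraph `H` if it meets every edge. -/
def IsCover {V : Type*} (C : Set V) (H : Set (Finset V)) : Prop :=
  ∀ e ∈ H, ∃ v ∈ C, v ∈ e

/-- The cover number `τ(H)`: the minimum cardinality of a cover of `H`. -/
noncomputable def coverNumber {V : Type*} (H : Set (Finset V)) : ℕ :=
  sInf {n | ∃ C : Finset V, IsCover (↑C) H ∧ C.card = n}

/-- The matching number `ν(H)`: the maximum size of a set of pairwise disjoint edges. -/
noncomputable def matchingNumber {V : Type*} (H : Set (Finset V)) : ℕ :=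
  sSup {n | ∃ M : Finset (Finset V), ↑M ⊆ H ∧
    (M : Set (Finset V)).Pairwise (fun e₁ e₂ => Disjoint e₁ e₂) ∧ M.card = n}

/-- A hypergraph is intersecting if any two edges share a vertex. -/
def Intersecting {V : Type*} (H : Set (Finset V)) : Prop :=
  ∀ e₁ ∈ H, ∀ e₂ ∈ H, ∃ v, v ∈ e₁ ∧ v ∈ e₂

/-- A hypergraph is `r`-uniform if every edge has exactly `r` vertices. -/
def Uniform {V : Type*} (H : Set (Finset V)) (r : ℕ) : Prop :=
  ∀ e ∈ H, e.card = r

/-- `H` is `r`-partite with the given sides: the sides partition the vertex set and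
every edge has at most one vertex in each side. -/
def Partite {V : Type*} {r : ℕ} (H : Set (Finset V)) (sides : Fin r → Set V) : Prop :=
  (∀ v : V, ∃! i, v ∈ sides i) ∧
  ∀ e ∈ H, ∀ i : Fin r, ∀ x ∈ e, ∀ y ∈ e, x ∈ sides i → y ∈ sides i → x = y

/-- Two hypergraphs are isomorphic if a bijection of the vertex sets carries the
edge set of one onto the edge set of the other. -/
def Isomorphic {V W : Type*} (H₁ : Set (Finset V)) (H₂ : Set (Finset W)) : Prop :=
  ∃ φ : V ≃ W, ∀ e : Finset V, e ∈ H₁ ↔ e.image φ ∈ H₂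

/-- The edge `Ê = E ∪ {v_i}`, where the new vertex `v_i` is encoded as `Sum.inr i`. -/
def hatE {V : Type*} {r : ℕ} (E : Finset V) (i : Fin r) : Finset (V ⊕ Fin r) :=
  insert (Sum.inr i) (E.image Sum.inl)

/-- The construction `H(T, S, F_1, …, F_r)`, with new vertices `v_i = Sum.inr i`. -/
def constructionH {V : Type*} {r : ℕ} (T : Set (Finset V)) (S : Finset V)
    (s : Fin r → V) (F : Fin r → Finset V) : Set (Finset (V ⊕ Fin r)) :=
  {Eh | ∃ E ∈ T, E ≠ S ∧ ∃ i : Fin r, s i ∈ E ∧ Eh = hatE E i} ∪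
  {Eh | ∃ i : Fin r, Eh = (F i).image Sum.inl} ∪
  {Eh | ∃ i : Fin r, Eh = hatE ((F i).erase (s i)) i}

/-- The hypergraph `S(T, S, F_1, …, F_r) = E2 ∪ E3`. -/
def constructionS {V : Type*} {r : ℕ}
    (s : Fin r → V) (F : Fin r → Finset V) : Set (Finset (V ⊕ Fin r)) :=
  {Eh | ∃ i : Fin r, Eh = (F i).image Sum.inl} ∪
  {Eh | ∃ i : Fin r, Eh = hatE ((F i).erase (s i)) i}

/-- The sides of the construction: the old sides (lifted), plus the new side `{v_1, …, v_r}`. -/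
def extSides {V : Type*} {r : ℕ} (sides : Fin r → Set V) : Fin (r + 1) → Set (V ⊕ Fin r) :=
  Fin.lastCases (Set.range Sum.inr) (fun i => Sum.inl '' sides i)

open Configuration

/-- The points of the line `ℓ` other than `w`, as a finset of the vertex type `{p // p ≠ w}`. -/
noncomputable def linePoints {P L : Type*} [Membership P L] [Fintype P] (w : P) (ℓ : L) :
    Finset {p : P // p ≠ w} :=
  Finset.univ.filter (fun p : {p : P // p ≠ w} => (p : P) ∈ ℓ)

/-- The truncated projective plane at the point `w`: the edges are the point sets of
the lines not passing through `w`, on the vertex set of points other than `w`. -/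
noncomputable def truncatedPP (P : Type*) (L : Type*) [Membership P L] [Fintype P] (w : P) :
    Set (Finset {p : P // p ≠ w}) :=
  {E | ∃ ℓ : L, w ∉ ℓ ∧ E = linePoints w ℓ}

/-- The sides of the truncated projective plane, given an enumeration `m` of
the lines through `w`. -/
def ppSide {P L : Type*} [Membership P L] {r : ℕ} (w : P) (m : Fin r → L) (i : Fin r) :
    Set {p : P // p ≠ w} :=
  {p : {p : P // p ≠ w} | (p : P) ∈ m i}

/-- `m` enumerates the lines through `w`. -/
def EnumeratesLinesThrough {P L : Type*} [Membership P L] {r : ℕ} (w : P) (m : Fin r → L) : Prop :=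
  Function.Injective m ∧ (∀ i, w ∈ m i) ∧ ∀ ℓ : L, w ∈ ℓ → ∃ i, m i = ℓ

/- ### Auxiliary lemmas -/

section FinsetHelpers
variable {V : Type*} [DecidableEq V] {r : ℕ}

lemma card_inl_inl (A B : Finset V) :
    ((A.image Sum.inl : Finset (V ⊕ Fin r)) ∩ B.image Sum.inl).card = (A ∩ B).card := by
  rw [← Finset.image_inter _ _ Sum.inl_injective,
    Finset.card_image_of_injective _ Sum.inl_injective]

lemma hat_inter_inl (A B : Finset V) (i : Fin r) :
    hatE A i ∩ B.image Sum.inl = (A ∩ B).image Sum.inl := by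
  ext x; cases x <;> simp [hatE]

lemma card_hat_inl (A B : Finset V) (i : Fin r) :
    (hatE A i ∩ B.image Sum.inl).card = (A ∩ B).card := by
  rw [hat_inter_inl, Finset.card_image_of_injective _ Sum.inl_injective]

lemma card_hat_hat (A B : Finset V) (i j : Fin r) :
    (hatE A i ∩ hatE B j).card = (A ∩ B).card + if i = j then 1 else 0 := by
  split_ifs with h
  · subst h
    have : hatE A i ∩ hatE B i = insert (Sum.inr i) ((A ∩ B).image Sum.inl) := by
      ext x; cases x <;> simp [hatE]
    rw [this, Finset.card_insert_of_notMem (by simp),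
      Finset.card_image_of_injective _ Sum.inl_injective]
  · have : hatE A i ∩ hatE B j = (A ∩ B).image Sum.inl := by
      ext x
      cases x with
      | inl v => simp [hatE]
      | inr k =>
        simp only [hatE, Finset.mem_inter, Finset.mem_insert, Finset.mem_image]
        constructor
        · rintro ⟨h1 | h1, h2 | h2⟩ <;> simp_all
        · rintro ⟨v, _, hv⟩; simp at hv
    rw [this, Finset.card_image_of_injective _ Sum.inl_injective, Nat.add_zero]

/-- The conclusion of statement 16, abbreviated. -/
def Conc (s : Fin r → V) (F : Fin r → Finset V) (e₁ e₂ : Finset (V ⊕ Fin r)) : Prop :=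
  ((e₁ ∩ e₂).card = 1 ∨ (e₁ ∩ e₂).card = 2 ∨ (e₁ ∩ e₂).card = r - 1 ∨ (e₁ ∩ e₂).card = r) ∧
  ((e₁ ∩ e₂).card = r - 1 → ∃ i : Fin r,
    (e₁ = (F i).image Sum.inl ∧ e₂ = hatE ((F i).erase (s i)) i) ∨
    (e₂ = (F i).image Sum.inl ∧ e₁ = hatE ((F i).erase (s i)) i))

lemma Conc.symm {s : Fin r → V} {F : Fin r → Finset V} {e₁ e₂ : Finset (V ⊕ Fin r)}
    (h : Conc s F e₁ e₂) : Conc s F e₂ e₁ := by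
  unfold Conc at h ⊢
  rw [Finset.inter_comm e₂ e₁]
  exact ⟨h.1, fun hc => (h.2 hc).imp fun i hi => hi.symm⟩

end FinsetHelpers

section PPHelpers
variable {P L : Type*} [Membership P L] [Fintype P] [Fintype L]
  [Configuration.ProjectivePlane P L] {w : P}

omit [Fintype L] [Configuration.ProjectivePlane P L] in
lemma mem_linePoints {ℓ : L} {p : {p : P // p ≠ w}} :
    p ∈ linePoints w ℓ ↔ (p : P) ∈ ℓ := by simp [linePoints]

lemma card_linePoints {ℓ : L} (hw : w ∉ ℓ) :
    (linePoints w ℓ).card = Configuration.ProjectivePlane.order P L + 1 := by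
  rw [← Configuration.ProjectivePlane.pointCount_eq P ℓ, Configuration.pointCount,
    Nat.card_eq_fintype_card, Fintype.card_subtype]
  rw [← Finset.card_image_of_injective (linePoints w ℓ) Subtype.val_injective]
  congr 1
  ext p
  simp only [Finset.mem_image, mem_linePoints, Finset.mem_filter, Finset.mem_univ, true_and]
  constructor
  · rintro ⟨q, hq, rfl⟩; exact hq
  · intro hp; exact ⟨⟨p, fun h => hw (h ▸ hp)⟩, hp, rfl⟩

lemma line_inter {ℓ₁ ℓ₂ : L} (h : ℓ₁ ≠ ℓ₂) (h1 : w ∉ ℓ₁) :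
    ∃ x : {p : P // p ≠ w}, linePoints w ℓ₁ ∩ linePoints w ℓ₂ = {x} := by
  obtain ⟨hx1, hx2⟩ := Configuration.HasPoints.mkPoint_ax (P := P) h
  refine ⟨⟨Configuration.HasPoints.mkPoint (P := P) h, fun he => h1 (he ▸ hx1)⟩, ?_⟩
  ext p
  simp only [Finset.mem_inter, mem_linePoints, Finset.mem_singleton]
  constructor
  · rintro ⟨hp1, hp2⟩
    exact Subtype.ext ((Configuration.Nondegenerate.eq_or_eq hp1 hx1 hp2 hx2).resolve_right h)
  · rintro rfl; exact ⟨hx1, hx2⟩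

end PPHelpers

theorem statement_16 {P L : Type*} [Membership P L] [Fintype P] [Fintype L]
    [Configuration.ProjectivePlane P L] {r : ℕ} (hr : 4 ≤ r)
    (horder : Configuration.ProjectivePlane.order P L = r - 1) (w : P)
    (m : Fin r → L) (hm : EnumeratesLinesThrough w m)
    (s : Fin r → {p : P // p ≠ w}) (hside : ∀ i, ((s i : P) ∈ m i))
    (hS : Finset.univ.image s ∈ truncatedPP P L w)
    (F : Fin r → Finset {p : P // p ≠ w})
    (hF : ∀ i, F i ∈ truncatedPP P L w)
    (hSF : ∀ i, Finset.univ.image s ∩ F i = {s i}) :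
    ∀ e₁ ∈ constructionH (truncatedPP P L w) (Finset.univ.image s) s F,
      ∀ e₂ ∈ constructionH (truncatedPP P L w) (Finset.univ.image s) s F,
        e₁ ≠ e₂ →
          ((e₁ ∩ e₂).card = 1 ∨ (e₁ ∩ e₂).card = 2 ∨
            (e₁ ∩ e₂).card = r - 1 ∨ (e₁ ∩ e₂).card = r) ∧
          ((e₁ ∩ e₂).card = r - 1 → ∃ i : Fin r,
            (e₁ = (F i).image Sum.inl ∧ e₂ = hatE ((F i).erase (s i)) i) ∨
            (e₂ = (F i).image Sum.inl ∧ e₁ = hatE ((F i).erase (s i)) i)) := by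
  classical
  set S : Finset {p : P // p ≠ w} := Finset.univ.image s with hSdef
  obtain ⟨ℓS, hwS, hSeq⟩ := hS
  -- basic facts
  have hsw : ∀ i, (s i : P) ≠ w := fun i => (s i).2
  have s_inj : Function.Injective s := by
    intro i j hij
    by_contra hne'
    have hij' : (s i : P) ∈ m j := by rw [hij]; exact hside j
    rcases Configuration.Nondegenerate.eq_or_eq (hside i) (hm.2.1 i) hij' (hm.2.1 j) with h | h
    · exact hsw i h
    · exact hne' (hm.1 h)
  have hr0 : Configuration.ProjectivePlane.order P L + 1 = r := by rw [horder]; omega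
  have cardF : ∀ i, (F i).card = r := by
    intro i
    obtain ⟨ℓ, hwℓ, hℓ⟩ := hF i
    rw [hℓ, card_linePoints hwℓ, hr0]
  have hsS : ∀ i, s i ∈ S := fun i => Finset.mem_image_of_mem s (Finset.mem_univ i)
  have hsF : ∀ i, s i ∈ F i := fun i =>
    (Finset.mem_inter.mp (by rw [hSF i]; exact Finset.mem_singleton_self _)).2
  have hsF' : ∀ i j, i ≠ j → s i ∉ F j := by
    intro i j hij hin
    exact hij (s_inj (Finset.mem_singleton.mp ((hSF j) ▸ Finset.mem_inter.mpr ⟨hsS i, hin⟩)))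
  have hFF : ∀ i j, i ≠ j → F i ≠ F j := fun i j hij h => hsF' i j hij (h ▸ hsF i)
  have hmeets : ∀ E ∈ truncatedPP P L w, ∀ E' ∈ truncatedPP P L w, E ≠ E' →
      ∃ x, E ∩ E' = {x} := by
    rintro E ⟨ℓ, hwℓ, rfl⟩ E' ⟨ℓ', hwℓ', rfl⟩ hne
    exact line_inter (fun h => hne (by rw [h])) hwℓ
  have hUniq : ∀ E ∈ truncatedPP P L w, E ≠ S → ∀ i j, s i ∈ E → s j ∈ E → i = j := by
    rintro E ⟨ℓ, hwℓ, rfl⟩ hES i j hi hj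
    have hi' : (s i : P) ∈ ℓ := mem_linePoints.mp hi
    have hj' : (s j : P) ∈ ℓ := mem_linePoints.mp hj
    have hiS : (s i : P) ∈ ℓS := mem_linePoints.mp (hSeq ▸ hsS i)
    have hjS : (s j : P) ∈ ℓS := mem_linePoints.mp (hSeq ▸ hsS j)
    rcases Configuration.Nondegenerate.eq_or_eq hi' hj' hiS hjS with h | h
    · exact s_inj (Subtype.ext h)
    · exact absurd (hSeq.trans (by rw [h])).symm hES
  have hFmem : ∀ i, F i ∈ truncatedPP P L w := hF
  -- case (1,1)
  have case11 : ∀ E, E ∈ truncatedPP P L w → E ≠ S → ∀ i, s i ∈ E →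
      ∀ E', E' ∈ truncatedPP P L w → E' ≠ S → ∀ i', s i' ∈ E' →
      hatE E i ≠ hatE E' i' → Conc s F (hatE E i) (hatE E' i') := by
    intro E hE hES i hi E' hE' hES' i' hi' hne
    by_cases hEE : E = E'
    · subst hEE
      exact absurd (by rw [hUniq E hE hES i i' hi hi']) hne
    · obtain ⟨x, hx⟩ := hmeets E hE E' hE' hEE
      have hc := card_hat_hat E E' i i'
      rw [hx, Finset.card_singleton] at hc
      split_ifs at hc <;>
        exact ⟨by omega, fun h => absurd h (by omega)⟩
  -- case (1,2)
  have case12 : ∀ E, E ∈ truncatedPP P L w → E ≠ S → ∀ i, s i ∈ E → ∀ j,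
      Conc s F (hatE E i) ((F j).image Sum.inl) := by
    intro E hE hES i hi j
    have hc := card_hat_inl E (F j) i
    by_cases hEF : E = F j
    · have h1 : (E ∩ F j).card = r := by rw [hEF, Finset.inter_self]; exact cardF j
      exact ⟨by omega, fun h => absurd h (by omega)⟩
    · obtain ⟨x, hx⟩ := hmeets E hE (F j) (hFmem j) hEF
      rw [hx, Finset.card_singleton] at hc
      exact ⟨by omega, fun h => absurd h (by omega)⟩
  -- case (1,3)
  have case13 : ∀ E, E ∈ truncatedPP P L w → E ≠ S → ∀ i, s i ∈ E → ∀ j,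
      Conc s F (hatE E i) (hatE ((F j).erase (s j)) j) := by
    intro E hE hES i hi j
    have hc := card_hat_hat E ((F j).erase (s j)) i j
    rw [Finset.inter_erase] at hc
    by_cases hEF : E = F j
    · have hij : i = j := by
        have : s i ∈ S ∩ F j := Finset.mem_inter.mpr ⟨hsS i, hEF ▸ hi⟩
        rw [hSF j] at this
        exact s_inj (Finset.mem_singleton.mp this)
      have h1 : ((E ∩ F j).erase (s j)).card = r - 1 := by
        rw [hEF, Finset.inter_self, Finset.card_erase_of_mem (hsF j), cardF j]
      rw [if_pos hij] at hc
      exact ⟨by omega, fun h => absurd h (by omega)⟩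
    · obtain ⟨x, hx⟩ := hmeets E hE (F j) (hFmem j) hEF
      rw [hx] at hc
      by_cases hij : i = j
      · subst hij
        have hxs : x = s i := by
          have : s i ∈ E ∩ F i := Finset.mem_inter.mpr ⟨hi, hsF i⟩
          rw [hx] at this
          exact (Finset.mem_singleton.mp this).symm
        rw [hxs, Finset.erase_singleton, Finset.card_empty, if_pos rfl] at hc
        exact ⟨by omega, fun h => absurd h (by omega)⟩
      · have hxs : x ≠ s j := by
          intro h
          have hxE : x ∈ E := (Finset.mem_inter.mp (hx ▸ Finset.mem_singleton_self x)).1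
          exact hij (hUniq E hE hES i j hi (h ▸ hxE))
        have h1 : (({x} : Finset {p : P // p ≠ w}).erase (s j)).card = 1 := by
          rw [Finset.erase_eq_of_notMem (by simp only [Finset.mem_singleton]; exact Ne.symm hxs), Finset.card_singleton]
        rw [if_neg hij] at hc
        exact ⟨by omega, fun h => absurd h (by omega)⟩
  -- case (2,2)
  have case22 : ∀ i j, ((F i).image Sum.inl : Finset ({p : P // p ≠ w} ⊕ Fin r)) ≠ (F j).image Sum.inl →
      Conc s F ((F i).image Sum.inl) ((F j).image Sum.inl) := by
    intro i j hne
    have hij : i ≠ j := by rintro rfl; exact hne rfl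
    obtain ⟨x, hx⟩ := hmeets (F i) (hFmem i) (F j) (hFmem j) (hFF i j hij)
    have hc := card_inl_inl (r := r) (F i) (F j)
    rw [hx, Finset.card_singleton] at hc
    exact ⟨by omega, fun h => absurd h (by omega)⟩
  -- case (2,3)
  have case23 : ∀ i j,
      Conc s F ((F i).image Sum.inl) (hatE ((F j).erase (s j)) j) := by
    intro i j
    have hc : (((F i).image Sum.inl : Finset _) ∩ hatE ((F j).erase (s j)) j).card
        = ((F j).erase (s j) ∩ F i).card := by
      rw [Finset.inter_comm]; exact card_hat_inl _ _ _
    by_cases hij : i = j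
    · subst hij
      rw [Finset.inter_eq_left.mpr (Finset.erase_subset _ _), Finset.card_erase_of_mem (hsF i),
        cardF i] at hc
      refine ⟨by omega, fun _ => ⟨i, Or.inl ⟨rfl, rfl⟩⟩⟩
    · obtain ⟨x, hx⟩ := hmeets (F j) (hFmem j) (F i) (hFmem i) (hFF j i (Ne.symm hij))
      rw [Finset.erase_inter, hx] at hc
      have hxs : x ≠ s j := by
        intro h
        have hxF : x ∈ F i := (Finset.mem_inter.mp (hx ▸ Finset.mem_singleton_self x)).2
        exact hsF' j i (Ne.symm hij) (h ▸ hxF)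
      have h1 : (({x} : Finset {p : P // p ≠ w}).erase (s j)).card = 1 := by
        rw [Finset.erase_eq_of_notMem (by simp only [Finset.mem_singleton]; exact Ne.symm hxs), Finset.card_singleton]
      exact ⟨by omega, fun h => absurd h (by omega)⟩
  -- case (3,3)
  have case33 : ∀ i j, hatE ((F i).erase (s i)) i ≠ hatE ((F j).erase (s j)) j →
      Conc s F (hatE ((F i).erase (s i)) i) (hatE ((F j).erase (s j)) j) := by
    intro i j hne
    have hij : i ≠ j := by rintro rfl; exact hne rfl
    obtain ⟨x, hx⟩ := hmeets (F i) (hFmem i) (F j) (hFmem j) (hFF i j hij)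
    have hc := card_hat_hat ((F i).erase (s i)) ((F j).erase (s j)) i j
    rw [Finset.erase_inter, Finset.inter_erase, hx, if_neg hij] at hc
    have hxF : x ∈ F i ∧ x ∈ F j := Finset.mem_inter.mp (hx ▸ Finset.mem_singleton_self x)
    have hxi : x ≠ s i := fun h => hsF' i j hij (h ▸ hxF.2)
    have hxj : x ≠ s j := fun h => hsF' j i (Ne.symm hij) (h ▸ hxF.1)
    have h1 : ((({x} : Finset {p : P // p ≠ w}).erase (s j)).erase (s i)).card = 1 := by
      have h2 : ({x} : Finset {p : P // p ≠ w}).erase (s j) = {x} :=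
        Finset.erase_eq_of_notMem (by simp only [Finset.mem_singleton]; exact Ne.symm hxj)
      rw [h2, Finset.erase_eq_of_notMem (by simp only [Finset.mem_singleton]; exact Ne.symm hxi),
        Finset.card_singleton]
    exact ⟨by omega, fun h => absurd h (by omega)⟩
  -- dispatch
  have instEq : (fun (a b : {p : P // p ≠ w}) => Classical.propDecidable (a = b))
      = (inferInstance : DecidableEq {p : P // p ≠ w}) :=
    funext fun a => funext fun b => Subsingleton.elim _ _
  intro e₁ he₁ e₂ he₂ hne
  suffices h : Conc s F e₁ e₂ by exact h
  rcases he₁ with (⟨E1, hE1, hES1, i1, hi1, rfl⟩ | ⟨i1, rfl⟩) | ⟨i1, rfl⟩ <;>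
    rcases he₂ with (⟨E2, hE2, hES2, i2, hi2, rfl⟩ | ⟨i2, rfl⟩) | ⟨i2, rfl⟩ <;>
    try rw [instEq] at hne ⊢
  · exact case11 E1 hE1 hES1 i1 hi1 E2 hE2 hES2 i2 hi2 hne
  · exact case12 E1 hE1 hES1 i1 hi1 i2
  · exact case13 E1 hE1 hES1 i1 hi1 i2
  · exact (case12 E2 hE2 hES2 i2 hi2 i1).symm
  · exact case22 i1 i2 hne
  · exact case23 i1 i2
  · exact (case13 E2 hE2 hES2 i2 hi2 i1).symm
  · exact (case23 i2 i1).symm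
  · exact case33 i1 i2 hne

end
end

section
/- For every ε > 0 there exists r_0 such that for every integer r ≥ r_0 there exists an r-partite r-uniform intersecting hypergraph H with cover number τ(H) ≥ (1−ε)·r. -/
open Finset

noncomputable section
open scoped Classical

open Configuration

/-!
An affine plane of order `q`, with its `q + 1` parallel classes as sides, is a `(q + 1)`-partite
intersecting family with `q²` edges and all degrees at most `q`, so by double counting it needs
at least `q` vertices to be covered. The ratio `|E| / Δ` is multiplicative under products of
such families and survives padding every edge with private vertices, so it suffices to
approximate `r` from below, up to a factor `1 - ε`, by a product `(P + 1) (p + 1)^a (p' + 1)^b`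
with prime `P, p, p'` and `a + b` small compared with `p`. Bertrand's postulate chooses `P`
within a factor `2`; the remaining factor `4` is bridged by the ladder
`(p + 1)^(J - j) (p' + 1)^j`, whose rungs are close when `p' - p` is small compared with `p`
and which spans a factor `4` in few steps when `p' - p` is large. Such a pair of primes exists by
Chebyshev's bounds and the pigeonhole principle.
-/

/-- An intersecting hypergraph with sides `ι`, whose edge `a` meets side `i` in the single vertex
`(i, edge a i)`; thus two edges meet exactly when they agree in some coordinate. -/
structure IntersectingTransversals where
  ι : Type
  X : Type
  A : Type
  [fintypeι : Fintype ι]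
  [fintypeA : Fintype A]
  edge : A → ι → X
  intersecting : ∀ a b, ∃ i, edge a i = edge b i

attribute [instance] IntersectingTransversals.fintypeι IntersectingTransversals.fintypeA

namespace IntersectingTransversals

variable (F G : IntersectingTransversals)

def degree (i : F.ι) (x : F.X) : ℕ := Nat.card {a // F.edge a i = x}

def toHypergraph : Set (Finset (F.ι × F.X)) :=
  Set.range fun a => univ.image fun i => (i, F.edge a i)

lemma uniform_toHypergraph : Uniform F.toHypergraph (Fintype.card F.ι) := by
  rintro _ ⟨a, rfl⟩
  rw [card_image_of_injective _ fun i j h => (Prod.mk.inj h).1, card_univ]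

lemma partite_toHypergraph {r : ℕ} (e : F.ι ≃ Fin r) :
    Partite F.toHypergraph fun k => {w | e w.1 = k} := by
  refine ⟨fun w => ⟨e w.1, rfl, fun k hk => hk.symm⟩, ?_⟩
  rintro _ ⟨a, rfl⟩ k x hx y hy hxk hyk
  simp only [mem_image, mem_univ, true_and] at hx hy
  obtain ⟨i, rfl⟩ := hx
  obtain ⟨j, rfl⟩ := hy
  obtain rfl : i = j := e.injective (hxk.trans hyk.symm)
  rfl

lemma isCover_edge (a : F.A) :
    IsCover (↑(univ.image fun i => (i, F.edge a i))) F.toHypergraph := by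
  rintro _ ⟨b, rfl⟩
  obtain ⟨i, hi⟩ := F.intersecting a b
  exact ⟨(i, F.edge a i), by simp, by simp [hi]⟩

lemma intersecting_toHypergraph : Intersecting F.toHypergraph := by
  rintro _ ⟨a, rfl⟩ e he
  obtain ⟨v, hv, hve⟩ := F.isCover_edge a e he
  exact ⟨v, hv, hve⟩

lemma card_le_coverNumber_mul {Δ : ℕ} (hΔ : ∀ i x, F.degree i x ≤ Δ) :
    Fintype.card F.A ≤ coverNumber F.toHypergraph * Δ := by
  rcases isEmpty_or_nonempty F.A with _ | ⟨⟨a⟩⟩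
  · simp
  obtain ⟨C, hC, hcard⟩ := Nat.sInf_mem
    (s := {n | ∃ C : Finset (F.ι × F.X), IsCover (↑C) F.toHypergraph ∧ #C = n})
    ⟨_, _, F.isCover_edge a, rfl⟩
  rw [coverNumber, ← hcard]
  calc Fintype.card F.A ≤ #(C.biUnion fun v => {a | F.edge a v.1 = v.2}) := by
        refine card_le_card fun a _ => ?_
        obtain ⟨v, hvC, hv⟩ := hC _ ⟨a, rfl⟩
        simp only [mem_image, mem_univ, true_and] at hv
        obtain ⟨i, rfl⟩ := hv
        exact mem_biUnion.2 ⟨_, hvC, by simp⟩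
    _ ≤ ∑ v ∈ C, F.degree v.1 v.2 := card_biUnion_le.trans_eq <| sum_congr rfl fun v _ => by
        rw [degree, Nat.card_eq_fintype_card, Fintype.card_subtype]
    _ ≤ #C * Δ := by simpa using sum_le_card_nsmul C _ Δ fun v _ => hΔ v.1 v.2

abbrev unit : IntersectingTransversals where
  ι := Unit
  X := Unit
  A := Unit
  edge _ _ := ()
  intersecting _ _ := ⟨(), rfl⟩

abbrev prod : IntersectingTransversals where
  ι := F.ι × G.ι
  X := F.X × G.X
  A := F.A × G.A
  edge a i := (F.edge a.1 i.1, G.edge a.2 i.2)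
  intersecting a b := by
    obtain ⟨i, hi⟩ := F.intersecting a.1 b.1
    obtain ⟨j, hj⟩ := G.intersecting a.2 b.2
    exact ⟨(i, j), by simp [hi, hj]⟩

lemma degree_prod (i : F.ι × G.ι) (x : F.X × G.X) :
    (F.prod G).degree i x = F.degree i.1 x.1 * G.degree i.2 x.2 := by
  rw [degree, degree, degree, ← Nat.card_prod, ← Nat.card_congr Equiv.subtypeProdEquivProd]
  simp [Prod.ext_iff]

abbrev pad (k : ℕ) : IntersectingTransversals where
  ι := F.ι ⊕ Fin k
  X := F.X ⊕ F.A
  A := F.A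
  edge a := Sum.elim (fun i => Sum.inl (F.edge a i)) fun _ => Sum.inr a
  intersecting a b := by
    obtain ⟨i, hi⟩ := F.intersecting a b
    exact ⟨Sum.inl i, by simp [hi]⟩

lemma degree_pad_le {Δ : ℕ} (hΔ : ∀ i x, F.degree i x ≤ Δ) (hΔ₀ : 0 < Δ) (k : ℕ)
    (i : F.ι ⊕ Fin k) (x : F.X ⊕ F.A) : (F.pad k).degree i x ≤ Δ := by
  rcases i with i | j <;> rcases x with x | b
  · simpa [degree] using hΔ i x
  · simp [degree]
  · simp [degree]
  · simpa [degree] using Nat.succ_le_of_lt hΔ₀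

/-- The affine plane over `K` with its `|K| + 1` parallel classes as sides: the line
`y = m x + b` meets the vertical line `x` at height `m x + b` and the class at infinity in
its slope `m`. -/
abbrev affinePlane (K : Type) [Field K] [Fintype K] : IntersectingTransversals where
  ι := Option K
  X := K
  A := K × K
  edge l i := i.elim l.1 fun x => l.1 * x + l.2
  intersecting l l' := by
    by_cases h : l.1 = l'.1
    · exact ⟨none, h⟩
    · refine ⟨some ((l'.2 - l.2) / (l.1 - l'.1)), ?_⟩
      simp only [Option.elim_some]
      field_simp [sub_ne_zero.2 h]
      ring

lemma degree_affinePlane_le (K : Type) [Field K] [Fintype K] (i : Option K) (y : K) :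
    (affinePlane K).degree i y ≤ Fintype.card K := by
  rw [← Nat.card_eq_fintype_card]
  cases i with
  | none =>
    refine Nat.card_le_card_of_injective (fun l => l.1.2) fun l l' h => ?_
    exact Subtype.ext (Prod.ext (l.2.trans l'.2.symm) h)
  | some x =>
    refine Nat.card_le_card_of_injective (fun l => l.1.1) fun l l' h => ?_
    have hl : l.1.1 * x + l.1.2 = l'.1.1 * x + l'.1.2 := l.2.trans l'.2.symm
    simp only at h
    exact Subtype.ext (Prod.ext h (by rw [h] at hl; exact add_left_cancel hl))

end IntersectingTransversals

open IntersectingTransversals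

/-- A certificate, by double counting edges against the degree bound `Δ`, that some `r`-partite
`r`-uniform intersecting hypergraph has `τ ≥ (1 - η) r`. -/
def AlmostExtremal (η : ℝ) (r : ℕ) : Prop :=
  ∃ F : IntersectingTransversals, Fintype.card F.ι = r ∧
    ∃ Δ : ℕ, 0 < Δ ∧ (∀ i x, F.degree i x ≤ Δ) ∧ (1 - η) * r * Δ ≤ Fintype.card F.A

namespace AlmostExtremal

lemma exists_hypergraph {η : ℝ} {r : ℕ} (h : AlmostExtremal η r) :
    ∃ (W : Type) (H : Set (Finset W)) (sides : Fin r → Set W),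
      Partite H sides ∧ Uniform H r ∧ Intersecting H ∧ (1 - η) * r ≤ coverNumber H := by
  obtain ⟨F, rfl, Δ, hΔ₀, hΔ, hcard⟩ := h
  refine ⟨_, _, _, F.partite_toHypergraph (Fintype.equivFin F.ι), F.uniform_toHypergraph,
    F.intersecting_toHypergraph, le_of_mul_le_mul_right ?_ (Nat.cast_pos.2 hΔ₀)⟩
  exact hcard.trans (mod_cast F.card_le_coverNumber_mul hΔ)

lemma affinePlane (K : Type) [Field K] [Fintype K] :
    AlmostExtremal (1 / (Fintype.card K + 1)) (Fintype.card K + 1) := by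
  refine ⟨IntersectingTransversals.affinePlane K, Fintype.card_option, Fintype.card K,
    Fintype.card_pos, degree_affinePlane_le K, ?_⟩
  rw [Fintype.card_prod]
  push_cast
  field_simp
  simp

lemma one : AlmostExtremal 0 1 :=
  ⟨unit, Fintype.card_unit, 1, one_pos,
    fun _ _ => Finite.card_le_one_iff_subsingleton.2 inferInstance, by simp⟩

lemma mul {η₁ η₂ : ℝ} {r₁ r₂ : ℕ} (h₁ : AlmostExtremal η₁ r₁) (h₂ : AlmostExtremal η₂ r₂)
    (hη₁ : 0 ≤ η₁) (hη₂ : 0 ≤ η₂) : AlmostExtremal (η₁ + η₂) (r₁ * r₂) := by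
  obtain ⟨F₁, rfl, Δ₁, hΔ₁₀, hΔ₁, hcard₁⟩ := h₁
  obtain ⟨F₂, rfl, Δ₂, hΔ₂₀, hΔ₂, hcard₂⟩ := h₂
  refine ⟨F₁.prod F₂, Fintype.card_prod _ _, Δ₁ * Δ₂, Nat.mul_pos hΔ₁₀ hΔ₂₀,
    fun i x => (degree_prod _ _ i x).trans_le (Nat.mul_le_mul (hΔ₁ _ _) (hΔ₂ _ _)), ?_⟩
  rw [Fintype.card_prod]
  push_cast
  rcases le_or_gt (η₁ + η₂) 1 with hη | hη
  · have h₂ : 0 ≤ (1 - η₂) * Fintype.card F₂.ι * Δ₂ := by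
      have : 0 ≤ 1 - η₂ := by linarith
      positivity
    calc (1 - (η₁ + η₂)) * (Fintype.card F₁.ι * Fintype.card F₂.ι) * (Δ₁ * Δ₂)
        ≤ (1 - η₁) * (1 - η₂) * (Fintype.card F₁.ι * Fintype.card F₂.ι) * (Δ₁ * Δ₂) := by
          gcongr
          nlinarith [mul_nonneg hη₁ hη₂]
      _ = ((1 - η₁) * Fintype.card F₁.ι * Δ₁) * ((1 - η₂) * Fintype.card F₂.ι * Δ₂) := by ring
      _ ≤ Fintype.card F₁.A * Fintype.card F₂.A :=
          mul_le_mul hcard₁ hcard₂ h₂ (Nat.cast_nonneg _)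
  · refine le_trans ?_ (by positivity)
    exact mul_nonpos_of_nonpos_of_nonneg
      (mul_nonpos_of_nonpos_of_nonneg (by linarith) (by positivity)) (by positivity)

lemma pow {η : ℝ} {r : ℕ} (h : AlmostExtremal η r) (hη : 0 ≤ η) (n : ℕ) :
    AlmostExtremal (n * η) (r ^ n) := by
  induction n with
  | zero => simpa using one
  | succ n ih => simpa [add_mul, pow_succ] using ih.mul h (by positivity) hη

/-- Padding every edge with new vertices keeps the certified bound `(1 - η) r`. -/
lemma of_le {η η' : ℝ} {r r' : ℕ} (h : AlmostExtremal η r) (hr : r ≤ r')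
    (hη : (1 - η') * r' ≤ (1 - η) * r) : AlmostExtremal η' r' := by
  obtain ⟨F, rfl, Δ, hΔ₀, hΔ, hcard⟩ := h
  refine ⟨F.pad (r' - Fintype.card F.ι), ?_, Δ, hΔ₀, F.degree_pad_le hΔ hΔ₀ _, ?_⟩
  · simp only [Fintype.card_sum, Fintype.card_fin]
    omega
  · exact (mul_le_mul_of_nonneg_right hη (Nat.cast_nonneg Δ)).trans hcard

lemma prime_add_one {p : ℕ} (hp : p.Prime) : AlmostExtremal (1 / (p + 1)) (p + 1) := by
  have := Fact.mk hp
  simpa using affinePlane (ZMod p)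

lemma pow_mul_pow {η : ℝ} {u v : ℕ} (hu : AlmostExtremal η u) (hv : AlmostExtremal η v)
    (hη : 0 ≤ η) {J j : ℕ} (hj : j ≤ J) : AlmostExtremal (J * η) (u ^ (J - j) * v ^ j) := by
  have := (hu.pow hη (J - j)).mul (hv.pow hη j) (by positivity) (by positivity)
  rwa [← add_mul, ← Nat.cast_add, Nat.sub_add_cancel hj] at this

end AlmostExtremal

open Chebyshev in
lemma theta_sub_theta_le_card_mul_log {m n : ℕ} (hmn : m ≤ n) :
    θ n - θ m ≤ #{p ∈ Ioc m n | p.Prime} * Real.log n := by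
  have hsplit : θ n = θ m + ∑ p ∈ Ioc m n with p.Prime, Real.log p := by
    simp only [theta, Nat.floor_natCast, sum_filter]
    exact (sum_Ioc_consecutive _ (Nat.zero_le m) hmn).symm
  rw [hsplit, add_sub_cancel_left]
  refine (sum_le_card_nsmul _ _ _ fun p hp => ?_).trans_eq (nsmul_eq_mul _ _)
  simp only [mem_filter, mem_Ioc] at hp
  exact Real.log_le_log (Nat.cast_pos.2 hp.2.pos) (Nat.cast_le.2 hp.1.2)

open Chebyshev in
/-- Chebyshev's bounds `θ(x) ≥ x log 2 - O(√x log x)` and `θ(x) ≤ x log 4` leave a mass of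
about `6 N log 2` for the primes in `(N, 8N]`, each contributing at most `log (8N)`. -/
lemma card_primes_Ioc_mul_ge (k : ℕ) :
    12 * ((2 : ℝ) ^ k) ^ 2 - (2 * k + 5) - 8 * 2 ^ k * (2 * k + 4) ≤
      #{p ∈ Ioc (2 ^ (2 * k + 1)) (8 * 2 ^ (2 * k + 1)) | p.Prime} * (2 * k + 4) := by
  set a : ℝ := 2 ^ k
  set L := Real.log 2
  have hpow (i : ℕ) : (2 : ℝ) ^ (2 * k + i) = 2 ^ i * a ^ 2 := by ring
  have hlog (i : ℕ) : Real.log (2 ^ i * a ^ 2) = (2 * k + i) * L := by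
    rw [← hpow, Real.log_pow]; push_cast; ring
  have hlog4 : Real.log (2 ^ 4 * a ^ 2) = (2 * k + 4) * L := mod_cast hlog 4
  have hlog5 : Real.log (2 ^ 5 * a ^ 2) = (2 * k + 5) * L := mod_cast hlog 5
  have hcast : ((8 * 2 ^ (2 * k + 1) : ℕ) : ℝ) = 2 ^ 4 * a ^ 2 := by push_cast; ring
  have hcast' : ((2 ^ (2 * k + 1) : ℕ) : ℝ) = 2 * a ^ 2 := by push_cast; ring
  have hsqrt : √(2 ^ 4 * a ^ 2) = 4 * a := by
    rw [show (2 : ℝ) ^ 4 * a ^ 2 = (4 * a) ^ 2 by ring, Real.sqrt_sq (by positivity)]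
  have hlog1 : Real.log (2 ^ 4 * a ^ 2 + 1) ≤ (2 * k + 5) * L := by
    rw [← hlog5]
    refine Real.log_le_log (by positivity) ?_
    nlinarith [one_le_pow₀ (M₀ := ℝ) (n := k) one_le_two]
  have hlog_four : Real.log 4 = 2 * L := by
    rw [show (4 : ℝ) = 2 ^ 2 by norm_num, Real.log_pow]; push_cast; ring
  have hlower := theta_ge (8 * 2 ^ (2 * k + 1))
  have hupper := theta_le_log4_mul_x (x := ((2 ^ (2 * k + 1) : ℕ) : ℝ)) (Nat.cast_nonneg _)
  have hdiff := theta_sub_theta_le_card_mul_log (m := 2 ^ (2 * k + 1))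
    (n := 8 * 2 ^ (2 * k + 1)) (by omega)
  rw [hcast, hsqrt, hlog4] at hlower
  rw [hcast', hlog_four] at hupper
  rw [hcast, hcast', hlog4] at hdiff
  refine le_of_mul_le_mul_right ?_ (Real.log_pos one_lt_two)
  linear_combination hlower + hlog1 + hupper + hdiff

lemma exists_le_card_primes_Ioc (C N₀ : ℕ) :
    ∃ N, N₀ ≤ N ∧ C ≤ #{p ∈ Ioc N (8 * N) | p.Prime} := by
  set j := C + N₀ + 4
  refine ⟨2 ^ (2 * (3 * j) + 1), ?_, ?_⟩
  · have := (2 * (3 * j) + 1).lt_two_pow_self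
    omega
  have hmass := card_primes_Ioc_mul_ge (3 * j)
  have ha : 1 + 7 * (j : ℝ) ≤ 2 ^ (3 * j) := by
    have := one_add_mul_le_pow (a := (7 : ℝ)) (by norm_num) j
    rw [show (1 : ℝ) + 7 = 2 ^ 3 by norm_num, ← pow_mul] at this
    linarith
  have hj : (C : ℝ) + 4 ≤ j := by simp [j]
  push_cast at hmass
  refine Nat.cast_le.1 (le_of_mul_le_mul_right (a := (2 * (3 * j : ℝ) + 4)) ?_ (by positivity))
  nlinarith

/-- Pigeonhole: more than `16 G²` primes in `(N, 8N]` fall into fewer than `16 G` windows of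
length `N / G`, so some window holds more than `G` of them; its extreme primes are at least `G`
and less than `N / G` apart. -/
lemma exists_primes_with_gap (G : ℕ) (hG : 0 < G) :
    ∃ p p' : ℕ, p.Prime ∧ p'.Prime ∧ G ≤ p' - p ∧ (p' - p) * G ≤ p := by
  obtain ⟨N, hGN, hcard⟩ := exists_le_card_primes_Ioc (16 * G * G + 1) G
  set S := {p ∈ Ioc N (8 * N) | p.Prime}
  set w := N / G
  have hw : 0 < w := Nat.div_pos hGN hG
  have hNw : N < G * w + G := by
    have := Nat.lt_div_mul_add (a := N) hG
    rw [mul_comm] at this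
    omega
  have hmaps : ∀ q ∈ S, q / w ∈ range (16 * G) := by
    intro q hq
    simp only [S, mem_filter, mem_Ioc] at hq
    rw [mem_range, Nat.div_lt_iff_lt_mul hw]
    nlinarith
  obtain ⟨b, -, hb⟩ := exists_lt_card_fiber_of_mul_lt_card_of_maps_to (n := G) hmaps
    (by rw [card_range]; omega)
  set T := {q ∈ S | q / w = b}
  have hT : T.Nonempty := card_pos.1 (by omega)
  have hTS : T ⊆ S := filter_subset _ _
  have hmin := hTS (T.min'_mem hT)
  have hmax := hTS (T.max'_mem hT)
  simp only [S, mem_filter, mem_Ioc] at hmin hmax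
  refine ⟨T.min' hT, T.max' hT, hmin.2, hmax.2, ?_, ?_⟩
  · have : #T ≤ #(Icc (T.min' hT) (T.max' hT)) :=
      card_le_card fun q hq => mem_Icc.2 ⟨T.min'_le q hq, T.le_max' q hq⟩
    rw [Nat.card_Icc] at this
    omega
  · have hdiv : T.min' hT / w = T.max' hT / w :=
      ((mem_filter.1 (T.min'_mem hT)).2).trans (mem_filter.1 (T.max'_mem hT)).2.symm
    have h₁ := Nat.lt_div_mul_add (a := T.max' hT) hw
    have h₂ := Nat.div_mul_le_self (T.min' hT) w
    rw [hdiv] at h₂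
    have : (T.max' hT - T.min' hT) * G ≤ w * G := Nat.mul_le_mul_right G (by omega)
    have : w * G ≤ N := Nat.div_mul_le_self N G
    omega

lemma exists_le_lt_succ_of_le_of_lt {α : Type*} [LinearOrder α] {x : ℕ → α} {y : α} {J : ℕ}
    (h₀ : x 0 ≤ y) (hJ : y < x J) : ∃ j < J, x j ≤ y ∧ y < x (j + 1) := by
  induction J with
  | zero => exact absurd h₀ hJ.not_ge
  | succ J ih =>
    by_cases h : y < x J
    · obtain ⟨j, hj, hxj⟩ := ih h
      exact ⟨j, by omega, hxj⟩
    · exact ⟨J, by omega, not_lt.1 h, hJ⟩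

lemma four_mul_pow_lt_add_pow {u d J : ℕ} (hu : 0 < u) (h : 4 * u < J * d) :
    4 * u ^ J < (u + d) ^ J := by
  have hu' : (0 : ℝ) < u := by exact_mod_cast hu
  have hbern : 1 + J * ((d : ℝ) / u) ≤ (1 + d / u) ^ J :=
    one_add_mul_le_pow (by linarith [(by positivity : (0 : ℝ) ≤ d / u)]) J
  have hratio : (4 : ℝ) < J * (d / u) := by
    rw [← mul_div_assoc, lt_div_iff₀ hu']; exact_mod_cast h
  have : 4 * (u : ℝ) ^ J < (u + d) ^ J := calc
    4 * (u : ℝ) ^ J < (1 + J * (d / u)) * u ^ J := by nlinarith [pow_pos hu' J]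
    _ ≤ (1 + d / u) ^ J * u ^ J := by gcongr
    _ = (u + d) ^ J := by rw [← mul_pow]; congr 1; field_simp
  exact_mod_cast this

/-- For primes `p < p'` with `G ≤ p' - p ≤ p / G`, the products `(p + 1)^(J - j) (p' + 1)^j`
climb from `n₀ = (p + 1)^J` past `4 n₀` in steps of ratio less than `1 + 1 / G`, while
`J / (p + 1) ≤ 5 / G` bounds their loss. -/
lemma exists_almostExtremal_near (G : ℕ) (hG : 0 < G) :
    ∃ n₀ : ℕ, 0 < n₀ ∧ ∀ y : ℝ, n₀ ≤ y → y ≤ 4 * n₀ →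
      ∃ X : ℕ, AlmostExtremal (5 / G) X ∧ (X : ℝ) ≤ y ∧ (1 - 1 / G) * y ≤ X := by
  obtain ⟨p, p', hp, hp', hGd, hdp⟩ := exists_primes_with_gap G hG
  set d := p' - p
  set u := p + 1
  set v := p' + 1
  set J := 4 * u / d + 1
  have hd : 0 < d := hG.trans_le hGd
  have hvu : v = u + d := by omega
  have hJd : 4 * u < J * d := by simpa [J, add_mul] using Nat.lt_div_mul_add (a := 4 * u) hd
  have hJu : J * G ≤ 5 * u := by
    have h₁ : 4 * u / d * G ≤ 4 * u := (Nat.mul_le_mul_left _ hGd).trans (Nat.div_mul_le_self _ _)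
    have h₂ : G ≤ u := by have := Nat.le_mul_of_pos_right d hG; omega
    rw [add_mul]
    omega
  have hspan : 4 * (u : ℝ) ^ J < (v : ℝ) ^ J := by
    rw [hvu]; exact_mod_cast four_mul_pow_lt_add_pow (by omega) hJd
  have hG' : (0 : ℝ) < G := by exact_mod_cast hG
  have hloss : (J : ℝ) * (1 / (p + 1)) ≤ 5 / G := by
    rw [mul_one_div, div_le_div_iff₀ (by positivity) hG']
    exact_mod_cast hJu
  have hvu' : (1 - 1 / G) * (v : ℝ) ≤ u := by
    have : (d : ℝ) * G ≤ v := by exact_mod_cast hdp.trans (by omega)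
    have : (d : ℝ) ≤ v / G := by rwa [le_div_iff₀ hG']
    calc (1 - 1 / G) * (v : ℝ) = v - v / G := by ring
      _ ≤ u := by push_cast [hvu] at this ⊢; linarith
  refine ⟨u ^ J, by positivity, fun y hy₀ hy₁ => ?_⟩
  push_cast at hy₀ hy₁
  obtain ⟨j, hjJ, hxj, hyx⟩ := exists_le_lt_succ_of_le_of_lt
    (x := fun j => ((u ^ (J - j) * v ^ j : ℕ) : ℝ)) (J := J) (by simpa using hy₀)
    (by simpa using hy₁.trans_lt hspan)
  have hstep : (u : ℝ) * (u ^ (J - (j + 1)) * v ^ (j + 1) : ℕ) = v * (u ^ (J - j) * v ^ j : ℕ) := by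
    rw [show J - j = J - (j + 1) + 1 by omega]
    push_cast
    ring
  have hpp' : AlmostExtremal (1 / (p + 1)) (p' + 1) :=
    (AlmostExtremal.prime_add_one hp').of_le le_rfl <| by
      gcongr
      exact_mod_cast (by omega : p ≤ p')
  refine ⟨_, ((AlmostExtremal.prime_add_one hp).pow_mul_pow hpp' (by positivity) hjJ.le).of_le
    le_rfl (mul_le_mul_of_nonneg_right (sub_le_sub_left hloss 1) (Nat.cast_nonneg _)), hxj, ?_⟩
  have hy : 0 ≤ y := le_trans (by positivity) hy₀
  refine (lt_of_mul_lt_mul_right ?_ (Nat.cast_nonneg v)).le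
  calc (1 - 1 / G) * y * v = (1 - 1 / G) * v * y := by ring
    _ ≤ u * y := mul_le_mul_of_nonneg_right hvu' hy
    _ < u * (u ^ (J - (j + 1)) * v ^ (j + 1) : ℕ) := mul_lt_mul_of_pos_left hyx (by positivity)
    _ = (u ^ (J - j) * v ^ j : ℕ) * v := by rw [hstep, mul_comm]

/-- Bertrand's postulate supplies a prime `P` with `r / (P + 1)` in the window `[n₀, 4 n₀]`. -/
lemma eventually_almostExtremal (G : ℕ) (hG : 7 ≤ G) :
    ∀ᶠ r in Filter.atTop, AlmostExtremal (7 / G) r := by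
  obtain ⟨n₀, hn₀, hnear⟩ := exists_almostExtremal_near G (by omega)
  refine Filter.eventually_atTop.2 ⟨4 * n₀ * G, fun r hr => ?_⟩
  set m := r / (4 * n₀)
  have hm : G ≤ m := (Nat.le_div_iff_mul_le (by positivity)).2 (by linarith)
  obtain ⟨P, hP, hmP, hPm⟩ := Nat.exists_prime_lt_and_le_two_mul m (by omega)
  have hlow : n₀ * (P + 1) ≤ r := by
    have : m * (4 * n₀) ≤ r := Nat.div_mul_le_self r (4 * n₀)
    nlinarith
  have hhigh : r < 4 * n₀ * (P + 1) := by
    have : r < m * (4 * n₀) + 4 * n₀ := Nat.lt_div_mul_add (by positivity)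
    nlinarith
  have hP₁ : (0 : ℝ) < P + 1 := by positivity
  obtain ⟨X, hX, hXy, hyX⟩ := hnear (r / (P + 1))
    (by rw [le_div_iff₀ hP₁]; exact_mod_cast hlow)
    (by rw [div_le_iff₀ hP₁]; exact_mod_cast hhigh.le)
  have hG' : (7 : ℝ) ≤ G := by exact_mod_cast hG
  have hPG : AlmostExtremal (1 / G) (P + 1) :=
    (AlmostExtremal.prime_add_one hP).of_le le_rfl <| by
      gcongr
      exact_mod_cast (by omega : G ≤ P + 1)
  rw [le_div_iff₀ hP₁] at hXy
  rw [mul_div_assoc', div_le_iff₀ hP₁] at hyX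
  refine (hPG.mul hX (by positivity) (by positivity)).of_le
    (by exact_mod_cast (mul_comm _ _).trans_le hXy) ?_
  have h₆ : 0 ≤ 1 - 6 / (G : ℝ) := by
    rw [sub_nonneg, div_le_one (by positivity)]
    linarith
  push_cast
  calc (1 - 7 / G) * (r : ℝ) ≤ (1 - 6 / G) * ((1 - 1 / G) * r) := by
        rw [show (1 - 6 / G) * ((1 - 1 / G) * (r : ℝ)) = (1 - 7 / G) * r + 6 / G / G * r by ring]
        exact le_add_of_nonneg_right (by positivity)
    _ ≤ (1 - 6 / G) * (X * (P + 1)) := by gcongr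
    _ = (1 - (1 / G + 5 / G)) * ((P + 1) * X) := by ring

theorem statement_17 (ε : ℝ) (hε : 0 < ε) :
    ∃ r₀ : ℕ, ∀ r : ℕ, r₀ ≤ r →
      ∃ (W : Type) (H : Set (Finset W)) (sides : Fin r → Set W),
        Partite H sides ∧ Uniform H r ∧ Intersecting H ∧
        (1 - ε) * (r : ℝ) ≤ (coverNumber H : ℝ) := by
  obtain ⟨r₀, h⟩ := Filter.eventually_atTop.1 (eventually_almostExtremal (⌈7 / ε⌉₊ + 7) (by omega))
  refine ⟨r₀, fun r hr => ((h r hr).of_le le_rfl ?_).exists_hypergraph⟩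
  gcongr
  rw [div_le_iff₀ (by positivity), ← div_le_iff₀' hε]
  push_cast
  linarith [Nat.le_ceil (7 / ε)]

end
end
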